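/- arXiv:1910.03377 — 3 statements merged into one kernel-verified Lean document; each statement's English description precedes it below -/
import Mathlib

section
/- Let A be an excellent F-rational local ring of characteristic p > 0 and dimension d > 0, and let H^d_m(A) denote the top local cohomology module with its natural Frobenius action F. Then the kernel of F - id on H^d_m(A) is zero. -/
/-!
Statement 0: Let `A` be an excellent F-rational local ring of characteristic `p > 0` and
dimension `d > 0`, and let `H = H^d_m(A)` denote the top local cohomology module with its
natural Frobenius action `F`.  Then `ker (F - id) = 0` on `H`.

Following the context, F-rationality (for the excellent local ring `A`) is taken in the sense
of Smith's characterization: `H^d_m(A)` is a simple left `A[F]`-module (where `A[F]` is the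
twisted polynomial ring with `F a = a^p F`); moreover `H^d_m(A)` is never finitely generated
as an `A`-module when `d > 0`.  We encode the module `H^d_m(A)` as an `A`-module `H` equipped
with its `p`-semilinear Frobenius `F`; "simple `A[F]`-module" means `H ≠ 0` and the only
`F`-stable `A`-submodules of `H` are `⊥` and `⊤`.
-/

theorem frobenius_sub_id_ker_eq_bot_of_FRational
    (p : ℕ) [Fact p.Prime] (A : Type) [CommRing A] [IsNoetherianRing A] [IsLocalRing A]
    [CharP A p]
    (d : ℕ) (hd : 0 < d) (hdim : ringKrullDim A = d)
    -- `H` is the top local cohomology module `H^d_m(A)` with its Frobenius action `F`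
    (H : Type) [AddCommGroup H] [Module A H]
    (F : H →+ H) (hsemilinear : ∀ (a : A) (x : H), F (a • x) = a ^ p • F x)
    -- `H^d_m(A)` is a simple `A[F]`-module (Smith's characterization of F-rationality of the
    -- excellent local ring `A`)
    (hne : ∃ x : H, x ≠ 0)
    (hsimple : ∀ N : Submodule A H, (∀ x ∈ N, F x ∈ N) → N = ⊥ ∨ N = ⊤)
    -- top local cohomology is never a finitely generated `A`-module in positive dimension
    (hnfg : ¬ Module.Finite A H) :
    ∀ x : H, F x - x = 0 → x = 0 := by
  intro x hx
  by_contra hx0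
  have hfix : F x = x := sub_eq_zero.mp hx
  set N : Submodule A H := Submodule.span A {x} with hN
  have hstab : ∀ y ∈ N, F y ∈ N := by
    intro y hy
    obtain ⟨a, rfl⟩ := Submodule.mem_span_singleton.mp hy
    rw [hsemilinear, hfix]
    exact Submodule.mem_span_singleton.mpr ⟨a ^ p, rfl⟩
  rcases hsimple N hstab with h | h
  · exact hx0 ((Submodule.eq_bot_iff N).mp h x (Submodule.mem_span_singleton_self (R := A) x))
  · exact hnfg ⟨by rw [← h]; exact Submodule.fg_span_singleton x⟩
end

section
/- A direct summand of a strongly F-regular ring is strongly F-regular: if S is a strongly F-regular finitely generated algebra over a field of characteristic p > 0 and R ⊆ S is a subring that is a direct summand of S as an R-module, with R a finitely generated algebra and every nonzerodivisor-avoiding element of R remaining outside minimal primes of S, then R is strongly F-regular. -/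
/-!
Statement 4: A direct summand of a strongly F-regular ring is strongly F-regular: if `S` is a
strongly F-regular finitely generated algebra over a field of characteristic `p > 0` and
`R ⊆ S` is a subring that is a direct summand of `S` as an `R`-module (via an `R`-linear
splitting `φ : S → R` with `φ 1 = 1`), with `R` a finitely generated algebra, and every element
of `R` outside all minimal primes of `R` remains outside all minimal primes of `S`, then `R` is
strongly F-regular.
-/

/-- `R` is strongly F-regular: for every `c` not contained in a minimal prime of `R` there is an
`e ≥ 0` such that the `R`-module map `R → F^e_* R`, `1 ↦ c`, splits. -/
def StronglyFRegular (R : Type) [CommRing R] (p : ℕ) : Prop :=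
  ∀ c : R, (∀ P ∈ minimalPrimes R, c ∉ P) →
    ∃ (e : ℕ) (φ : R →+ R), (∀ r x : R, φ (r ^ p ^ e * x) = r * φ x) ∧ φ c = 1

theorem stronglyFRegular_of_directSummand
    (k : Type) [Field k] (p : ℕ) [Fact p.Prime] [CharP k p]
    (R S : Type) [CommRing R] [CommRing S]
    [Algebra k R] [Algebra k S] [Algebra R S] [IsScalarTower k R S]
    (hRft : Algebra.FiniteType k R) (hSft : Algebra.FiniteType k S)
    -- `R` is a direct summand of `S` as an `R`-module
    (φ : S →ₗ[R] R) (hφ : φ 1 = 1)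
    -- elements of `R` avoiding minimal primes of `R` avoid minimal primes of `S`
    (hmin : ∀ c : R, (∀ P ∈ minimalPrimes R, c ∉ P) →
      ∀ Q ∈ minimalPrimes S, algebraMap R S c ∉ Q)
    (hS : StronglyFRegular S p) :
    StronglyFRegular R p := by
  intro c hc
  obtain ⟨e, ψ, hψ, hψc⟩ := hS (algebraMap R S c) (hmin c hc)
  refine ⟨e, (φ.toAddMonoidHom.comp ψ).comp (algebraMap R S).toAddMonoidHom, ?_, ?_⟩
  · intro r x
    show φ (ψ (algebraMap R S (r ^ p ^ e * x))) = r * φ (ψ (algebraMap R S x))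
    rw [map_mul, map_pow, hψ, ← Algebra.smul_def, map_smul, smul_eq_mul]
  · show φ (ψ (algebraMap R S c)) = 1
    rw [hψc, hφ]
end

section
/- Let (A, m) be a strictly Henselian Noetherian local ring of characteristic p > 0 of dimension 1 which is a normal domain, let i be the inclusion of the closed point and j the inclusion of the punctured spectrum U. Then R^0Γ(Ri^! F_p) = R^1Γ(Ri^! F_p) = 0; equivalently, H^0_ét(Spec A, F_p) → H^0_ét(U, F_p) is an isomorphism and H^1_ét(Spec A, F_p) → H^1_ét(U, F_p) is injective. -/
/-!
A one-dimensional local domain has exactly two points, the closed point and the generic point,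
so the punctured spectrum is the generic point alone. Both `Spec A` and this point are connected,
so their locally constant functions are the constants. A section `x` over the punctured spectrum
with `x ^ p - x = a` has a germ at the generic point, an element of the fraction field of `A`
that is a root of the monic polynomial `X ^ p - X - a`; normality puts it in `A`.
-/

open AlgebraicGeometry Opposite

/-- The punctured spectrum of a local ring: the complement of the closed point. -/
noncomputable def puncturedSpectrum (A : Type) [CommRing A] [IsLocalRing A] :
    TopologicalSpace.Opens (PrimeSpectrum A) :=
  ⟨{IsLocalRing.closedPoint A}ᶜ,
    ((PrimeSpectrum.isClosed_singleton_iff_isMaximal _).mpr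
      (IsLocalRing.maximalIdeal.isMaximal A)).isOpen_compl⟩

theorem LocallyConstant.comap_subtypeVal_bijective {X Z : Type*} [TopologicalSpace X]
    [PreconnectedSpace X] {S : Set X} (hS : IsPreconnected S) (hne : S.Nonempty) :
    Function.Bijective
      (fun g : LocallyConstant X Z => g.comap ⟨Subtype.val, continuous_subtype_val⟩ :
        LocallyConstant X Z → LocallyConstant S Z) := by
  have : PreconnectedSpace S := isPreconnected_iff_preconnectedSpace.mp hS
  obtain ⟨s, hs⟩ := hne
  constructor
  · intro g₁ g₂ h
    ext x
    rw [g₁.apply_eq_of_preconnectedSpace x s, g₂.apply_eq_of_preconnectedSpace x s]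
    exact LocallyConstant.congr_fun h ⟨s, hs⟩
  · intro f
    refine ⟨LocallyConstant.const X (f ⟨s, hs⟩), ?_⟩
    ext t
    exact (f.apply_eq_of_preconnectedSpace t ⟨s, hs⟩).symm

theorem IsIntegrallyClosed.exists_pow_sub_self_eq {R K : Type*} [CommRing R] [Nontrivial R]
    [CommRing K] [Algebra R K] [IsFractionRing R K] [IsIntegrallyClosed R] {n : ℕ} (hn : 1 < n)
    {a : R} {z : K} (hz : z ^ n - z = algebraMap R K a) : ∃ y : R, y ^ n - y = a := by
  open Polynomial in
  have hint : IsIntegral R z := by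
    refine ⟨X ^ n - (X + C a), monic_X_pow_sub (by rw [degree_X_add_C]; exact_mod_cast hn), ?_⟩
    rw [eval₂_sub, eval₂_add, eval₂_X_pow, eval₂_X, eval₂_C, ← sub_sub, hz, sub_self]
  obtain ⟨y, rfl⟩ := IsIntegrallyClosed.isIntegral_iff.mp hint
  refine ⟨y, IsFractionRing.injective R K ?_⟩
  rw [map_sub, map_pow, hz]

theorem puncturedSpectrum_eq_singleton_bot (A : Type) [CommRing A] [IsLocalRing A] [IsDomain A]
    (hdim : ringKrullDim A = 1) :
    (puncturedSpectrum A : Set (PrimeSpectrum A)) = {⊥} := by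
  have : Ring.KrullDimLE 1 A := Ring.krullDimLE_iff.mpr hdim.le
  have hm : IsLocalRing.maximalIdeal A ≠ ⊥ := fun h =>
    (ringKrullDim_eq_one_iff_of_isLocalRing_isDomain.mp hdim).1
      (IsLocalRing.isField_iff_maximalIdeal_eq.mpr h)
  ext q
  simp only [puncturedSpectrum, TopologicalSpace.Opens.coe_mk, Set.mem_compl_iff,
    Set.mem_singleton_iff]
  constructor
  · intro hq
    by_contra hne
    exact hq (PrimeSpectrum.ext (IsLocalRing.eq_maximalIdeal
      (q.2.isMaximal_of_ne_bot fun h => hne (PrimeSpectrum.ext h))))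
  · rintro rfl h
    exact hm (congrArg PrimeSpectrum.asIdeal h).symm

theorem isFractionRing_stalk_bot (A : Type) [CommRing A] [IsDomain A] :
    IsFractionRing A ((Spec.structureSheaf A).presheaf.stalk (⊥ : PrimeSpectrum A)) := by
  unfold IsFractionRing
  rw [← Ideal.primeCompl_bot]
  exact StructureSheaf.IsLocalization.to_stalk A ⊥

theorem costalk_vanishing_of_strictlyHenselian_dim_one_general
    (p : ℕ) [Fact p.Prime] (A : Type) [CommRing A] [IsLocalRing A]
    [IsDomain A] [IsIntegrallyClosed A]
    (hdim : ringKrullDim A = 1) :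
    -- `H⁰_ét(Spec A, 𝔽_p) → H⁰_ét(U, 𝔽_p)` is an isomorphism, i.e. restriction of locally
    -- constant `𝔽_p`-valued functions to the punctured spectrum is bijective
    (Function.Bijective
      (fun g : LocallyConstant (PrimeSpectrum A) (ZMod p) =>
        g.comap ⟨Subtype.val, continuous_subtype_val⟩ :
          LocallyConstant (PrimeSpectrum A) (ZMod p) →
          LocallyConstant (puncturedSpectrum A) (ZMod p)))
    -- `H¹_ét(Spec A, 𝔽_p) → H¹_ét(U, 𝔽_p)` is injective
    ∧ (∀ a : A,
        (∃ x : (Spec.structureSheaf A).1.obj (op (puncturedSpectrum A)),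
            x ^ p - x = StructureSheaf.toOpen A (puncturedSpectrum A) a) →
        ∃ y : A, y ^ p - y = a) := by
  have hU := puncturedSpectrum_eq_singleton_bot A hdim
  have hbot : (⊥ : PrimeSpectrum A) ∈ puncturedSpectrum A := by
    rw [← SetLike.mem_coe, hU]
    exact Set.mem_singleton _
  refine ⟨LocallyConstant.comap_subtypeVal_bijective (hU ▸ isPreconnected_singleton)
    ⟨⊥, hbot⟩, ?_⟩
  rintro a ⟨x, hx⟩
  have := isFractionRing_stalk_bot A
  let germ := (Spec.structureSheaf A).presheaf.germ _ (⊥ : PrimeSpectrum A) hbot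
  refine IsIntegrallyClosed.exists_pow_sub_self_eq (Fact.out : p.Prime).one_lt (z := germ x) ?_
  rw [← map_pow, ← map_sub, hx]
  exact StructureSheaf.algebraMap_germ_apply _ _ hbot a

theorem costalk_vanishing_of_strictlyHenselian_dim_one
    (p : ℕ) [Fact p.Prime] (A : Type) [CommRing A] [IsNoetherianRing A] [IsLocalRing A]
    [HenselianLocalRing A] [IsSepClosed (IsLocalRing.ResidueField A)]
    [IsDomain A] [IsIntegrallyClosed A] [CharP A p]
    (hdim : ringKrullDim A = 1) :
    -- `H⁰_ét(Spec A, 𝔽_p) → H⁰_ét(U, 𝔽_p)` is an isomorphism, i.e. restriction of locally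
    -- constant `𝔽_p`-valued functions to the punctured spectrum is bijective
    (Function.Bijective
      (fun g : LocallyConstant (PrimeSpectrum A) (ZMod p) =>
        g.comap ⟨Subtype.val, continuous_subtype_val⟩ :
          LocallyConstant (PrimeSpectrum A) (ZMod p) →
          LocallyConstant (puncturedSpectrum A) (ZMod p)))
    -- `H¹_ét(Spec A, 𝔽_p) → H¹_ét(U, 𝔽_p)` is injective
    ∧ (∀ a : A,
        (∃ x : (Spec.structureSheaf A).1.obj (op (puncturedSpectrum A)),
            x ^ p - x = StructureSheaf.toOpen A (puncturedSpectrum A) a) →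
        ∃ y : A, y ^ p - y = a) :=
  costalk_vanishing_of_strictlyHenselian_dim_one_general p A hdim
end
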